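/- Under diagonal dominance, any solution {U^n} of the implicit scheme with initial data φ and boundary data φ^n satisfies the l∞ stability bound max_n ‖U^n‖_∞ ≤ max( ‖φ‖_∞, max_n ‖φⁿ‖_{∞, boundary} ). -/
import Mathlib

/-- The sup of a linear function `s ↦ s/2 * c` over `[a, b]` is attained at an endpoint. -/
lemma sSup_half_mul (a b c : ℝ) (hab : a ≤ b) :
    sSup ((fun s => s / 2 * c) '' Set.Icc a b) = max (a / 2 * c) (b / 2 * c) := by
  apply IsGreatest.csSup_eq
  constructor
  · rcases le_total 0 c with hc | hc
    · have hm : max (a / 2 * c) (b / 2 * c) = b / 2 * c := max_eq_right (by nlinarith)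
      rw [hm]
      exact ⟨b, Set.right_mem_Icc.2 hab, rfl⟩
    · have hm : max (a / 2 * c) (b / 2 * c) = a / 2 * c := max_eq_left (by nlinarith)
      rw [hm]
      exact ⟨a, Set.left_mem_Icc.2 hab, rfl⟩
  · rintro x ⟨s, hs, rfl⟩
    rcases le_total 0 c with hc | hc
    · exact le_max_of_le_right (by nlinarith [hs.2])
    · exact le_max_of_le_left (by nlinarith [hs.1])

lemma combo_plus_le (h s t b m v1 v2 v3 v4 w1 w2 : ℝ) (hh : 0 < h)
    (hb : 0 ≤ b) (hs : b ≤ s) (ht : b ≤ t)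
    (h1 : v1 ≤ m) (h2 : v2 ≤ m) (h3 : v3 ≤ m) (h4 : v4 ≤ m)
    (h5 : w1 ≤ m) (h6 : w2 ≤ m) :
    s / 2 * ((v1 - 2 * m + v2) / h ^ 2) + t / 2 * ((v3 - 2 * m + v4) / h ^ 2)
      + b * ((w1 + 2 * m + w2 - v1 - v2 - v3 - v4) / (2 * h ^ 2)) ≤ 0 := by
  have hh2 : (0:ℝ) < h ^ 2 := by positivity
  have key : s / 2 * ((v1 - 2 * m + v2) / h ^ 2) + t / 2 * ((v3 - 2 * m + v4) / h ^ 2)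
      + b * ((w1 + 2 * m + w2 - v1 - v2 - v3 - v4) / (2 * h ^ 2))
      = ((s - b) * (v1 - m) + (s - b) * (v2 - m) + (t - b) * (v3 - m)
        + (t - b) * (v4 - m) + b * (w1 - m) + b * (w2 - m)) / (2 * h ^ 2) := by
    field_simp
    ring
  rw [key]
  apply div_nonpos_of_nonpos_of_nonneg _ (by positivity)
  have e1 : (s - b) * (v1 - m) ≤ 0 :=
    mul_nonpos_of_nonneg_of_nonpos (by linarith) (by linarith)
  have e2 : (s - b) * (v2 - m) ≤ 0 :=
    mul_nonpos_of_nonneg_of_nonpos (by linarith) (by linarith)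
  have e3 : (t - b) * (v3 - m) ≤ 0 :=
    mul_nonpos_of_nonneg_of_nonpos (by linarith) (by linarith)
  have e4 : (t - b) * (v4 - m) ≤ 0 :=
    mul_nonpos_of_nonneg_of_nonpos (by linarith) (by linarith)
  have e5 : b * (w1 - m) ≤ 0 :=
    mul_nonpos_of_nonneg_of_nonpos hb (by linarith)
  have e6 : b * (w2 - m) ≤ 0 :=
    mul_nonpos_of_nonneg_of_nonpos hb (by linarith)
  linarith

lemma combo_plus_ge (h s t b m v1 v2 v3 v4 w1 w2 : ℝ) (hh : 0 < h)
    (hb : 0 ≤ b) (hs : b ≤ s) (ht : b ≤ t)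
    (h1 : m ≤ v1) (h2 : m ≤ v2) (h3 : m ≤ v3) (h4 : m ≤ v4)
    (h5 : m ≤ w1) (h6 : m ≤ w2) :
    0 ≤ s / 2 * ((v1 - 2 * m + v2) / h ^ 2) + t / 2 * ((v3 - 2 * m + v4) / h ^ 2)
      + b * ((w1 + 2 * m + w2 - v1 - v2 - v3 - v4) / (2 * h ^ 2)) := by
  have hh2 : (0:ℝ) < h ^ 2 := by positivity
  have key : s / 2 * ((v1 - 2 * m + v2) / h ^ 2) + t / 2 * ((v3 - 2 * m + v4) / h ^ 2)
      + b * ((w1 + 2 * m + w2 - v1 - v2 - v3 - v4) / (2 * h ^ 2))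
      = ((s - b) * (v1 - m) + (s - b) * (v2 - m) + (t - b) * (v3 - m)
        + (t - b) * (v4 - m) + b * (w1 - m) + b * (w2 - m)) / (2 * h ^ 2) := by
    field_simp
    ring
  rw [key]
  apply div_nonneg _ (by positivity)
  have e1 : 0 ≤ (s - b) * (v1 - m) := mul_nonneg (by linarith) (by linarith)
  have e2 : 0 ≤ (s - b) * (v2 - m) := mul_nonneg (by linarith) (by linarith)
  have e3 : 0 ≤ (t - b) * (v3 - m) := mul_nonneg (by linarith) (by linarith)
  have e4 : 0 ≤ (t - b) * (v4 - m) := mul_nonneg (by linarith) (by linarith)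
  have e5 : 0 ≤ b * (w1 - m) := mul_nonneg hb (by linarith)
  have e6 : 0 ≤ b * (w2 - m) := mul_nonneg hb (by linarith)
  linarith

lemma combo_minus_le (h s t b m v1 v2 v3 v4 w3 w4 : ℝ) (hh : 0 < h)
    (hb : b ≤ 0) (hs : -b ≤ s) (ht : -b ≤ t)
    (h1 : v1 ≤ m) (h2 : v2 ≤ m) (h3 : v3 ≤ m) (h4 : v4 ≤ m)
    (h5 : w3 ≤ m) (h6 : w4 ≤ m) :
    s / 2 * ((v1 - 2 * m + v2) / h ^ 2) + t / 2 * ((v3 - 2 * m + v4) / h ^ 2)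
      + b * ((v1 + v2 + v3 + v4 - w3 - 2 * m - w4) / (2 * h ^ 2)) ≤ 0 := by
  have hh2 : (0:ℝ) < h ^ 2 := by positivity
  have key : s / 2 * ((v1 - 2 * m + v2) / h ^ 2) + t / 2 * ((v3 - 2 * m + v4) / h ^ 2)
      + b * ((v1 + v2 + v3 + v4 - w3 - 2 * m - w4) / (2 * h ^ 2))
      = ((s + b) * (v1 - m) + (s + b) * (v2 - m) + (t + b) * (v3 - m)
        + (t + b) * (v4 - m) + (-b) * (w3 - m) + (-b) * (w4 - m)) / (2 * h ^ 2) := by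
    field_simp
    ring
  rw [key]
  apply div_nonpos_of_nonpos_of_nonneg _ (by positivity)
  have e1 : (s + b) * (v1 - m) ≤ 0 :=
    mul_nonpos_of_nonneg_of_nonpos (by linarith) (by linarith)
  have e2 : (s + b) * (v2 - m) ≤ 0 :=
    mul_nonpos_of_nonneg_of_nonpos (by linarith) (by linarith)
  have e3 : (t + b) * (v3 - m) ≤ 0 :=
    mul_nonpos_of_nonneg_of_nonpos (by linarith) (by linarith)
  have e4 : (t + b) * (v4 - m) ≤ 0 :=
    mul_nonpos_of_nonneg_of_nonpos (by linarith) (by linarith)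
  have e5 : (-b) * (w3 - m) ≤ 0 :=
    mul_nonpos_of_nonneg_of_nonpos (by linarith) (by linarith)
  have e6 : (-b) * (w4 - m) ≤ 0 :=
    mul_nonpos_of_nonneg_of_nonpos (by linarith) (by linarith)
  linarith

/-- The nonlinear implicit scheme operator on the grid. -/
noncomputable def gridScheme (a1 b1 a2 b2 bl bu Δt h : ℝ)
    (Un Up : ℤ → ℤ → ℝ) (i j : ℤ) : ℝ :=
  (Un i j - Up i j) / Δt
    - sSup ((fun s => s / 2 *
        ((Un (i + 1) j - 2 * Un i j + Un (i - 1) j) / h ^ 2)) '' Set.Icc a1 b1)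
    - sSup ((fun s => s / 2 *
        ((Un i (j + 1) - 2 * Un i j + Un i (j - 1)) / h ^ 2)) '' Set.Icc a2 b2)
    - max (bu * ((Un (i + 1) (j + 1) + 2 * Un i j + Un (i - 1) (j - 1)
          - Un (i + 1) j - Un (i - 1) j - Un i (j + 1) - Un i (j - 1))
          / (2 * h ^ 2)))
        (bl * ((Un (i + 1) j + Un (i - 1) j + Un i (j + 1) + Un i (j - 1)
          - Un (i + 1) (j - 1) - 2 * Un i j - Un (i - 1) (j + 1))
          / (2 * h ^ 2)))

/-- l∞ stability: a solution of the implicit scheme is bounded by the max of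
the sup norm of the initial data and of the boundary data. -/
theorem scheme_linf_stability (a1 b1 a2 b2 bl bu Δt h : ℝ) (M N : ℕ)
    (ha1 : 0 < a1) (h1 : a1 ≤ b1) (ha2 : 0 < a2) (h2 : a2 ≤ b2)
    (hbl : bl < 0) (hbu : 0 < bu) (hΔt : 0 < Δt) (hh : 0 < h) (hM : 2 ≤ M)
    (hdd1 : |bu| ≤ a1) (hdd2 : |bu| ≤ a2) (hdd3 : |bl| ≤ a1) (hdd4 : |bl| ≤ a2)
    (U : ℕ → ℤ → ℤ → ℝ)
    (hU : ∀ n, n + 1 ≤ N → ∀ i j : ℤ,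
      0 < i → i < (M : ℤ) → 0 < j → j < (M : ℤ) →
      gridScheme a1 b1 a2 b2 bl bu Δt h (U (n + 1)) (U n) i j = 0)
    (C0 Cb : ℝ)
    (hinit : ∀ i j : ℤ, 0 ≤ i → i ≤ (M : ℤ) → 0 ≤ j → j ≤ (M : ℤ) →
      |U 0 i j| ≤ C0)
    (hbdry : ∀ n, n ≤ N → ∀ i j : ℤ, 0 ≤ i → i ≤ (M : ℤ) → 0 ≤ j → j ≤ (M : ℤ) →
      (i = 0 ∨ i = (M : ℤ) ∨ j = 0 ∨ j = (M : ℤ)) → |U n i j| ≤ Cb) :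
    ∀ n, n ≤ N → ∀ i j : ℤ, 0 ≤ i → i ≤ (M : ℤ) → 0 ≤ j → j ≤ (M : ℤ) →
      |U n i j| ≤ max C0 Cb := by
  have hbu1 : bu ≤ a1 := (le_abs_self bu).trans hdd1
  have hbu2 : bu ≤ a2 := (le_abs_self bu).trans hdd2
  have hbl1 : -bl ≤ a1 := (neg_le_abs bl).trans hdd3
  have hbl2 : -bl ≤ a2 := (neg_le_abs bl).trans hdd4
  intro n
  induction n with
  | zero =>
    intro _ i j hi0 hiM hj0 hjM
    exact (hinit i j hi0 hiM hj0 hjM).trans (le_max_left _ _)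
  | succ n ih =>
    intro hn
    have hnN : n ≤ N := by omega
    have IH := ih hnN
    set S : Finset (ℤ × ℤ) := Finset.Icc 0 (M : ℤ) ×ˢ Finset.Icc 0 (M : ℤ) with hS
    have hmemS : ∀ a b : ℤ, 0 ≤ a → a ≤ (M : ℤ) → 0 ≤ b → b ≤ (M : ℤ) →
        (a, b) ∈ S := by
      intro a b ha1' ha2' hb1' hb2'
      simp only [hS, Finset.mem_product, Finset.mem_Icc]
      exact ⟨⟨ha1', ha2'⟩, ⟨hb1', hb2'⟩⟩
    have hSne : S.Nonempty :=
      ⟨(0, 0), hmemS 0 0 le_rfl (by positivity) le_rfl (by positivity)⟩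
    -- The key interior estimate, for a point where the max (resp. min) is attained.
    have hinterior : ∀ i j : ℤ, 0 < i → i < (M : ℤ) → 0 < j → j < (M : ℤ) →
        ((∀ a b : ℤ, 0 ≤ a → a ≤ (M : ℤ) → 0 ≤ b → b ≤ (M : ℤ) →
            U (n + 1) a b ≤ U (n + 1) i j) → U (n + 1) i j ≤ U n i j) ∧
        ((∀ a b : ℤ, 0 ≤ a → a ≤ (M : ℤ) → 0 ≤ b → b ≤ (M : ℤ) →
            U (n + 1) i j ≤ U (n + 1) a b) → U n i j ≤ U (n + 1) i j) := by
      intro i j hi0 hiM hj0 hjM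
      have heq := hU n hn i j hi0 hiM hj0 hjM
      unfold gridScheme at heq
      rw [sSup_half_mul _ _ _ h1, sSup_half_mul _ _ _ h2] at heq
      set m := U (n + 1) i j with hm
      set v1 := U (n + 1) (i + 1) j with hv1
      set v2 := U (n + 1) (i - 1) j with hv2
      set v3 := U (n + 1) i (j + 1) with hv3
      set v4 := U (n + 1) i (j - 1) with hv4
      set w1 := U (n + 1) (i + 1) (j + 1) with hw1
      set w2 := U (n + 1) (i - 1) (j - 1) with hw2
      set w3 := U (n + 1) (i + 1) (j - 1) with hw3
      set w4 := U (n + 1) (i - 1) (j + 1) with hw4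
      constructor
      · -- maximum point
        intro hmax
        have n1 : v1 ≤ m := hmax _ _ (by omega) (by omega) (by omega) (by omega)
        have n2 : v2 ≤ m := hmax _ _ (by omega) (by omega) (by omega) (by omega)
        have n3 : v3 ≤ m := hmax _ _ (by omega) (by omega) (by omega) (by omega)
        have n4 : v4 ≤ m := hmax _ _ (by omega) (by omega) (by omega) (by omega)
        have n5 : w1 ≤ m := hmax _ _ (by omega) (by omega) (by omega) (by omega)
        have n6 : w2 ≤ m := hmax _ _ (by omega) (by omega) (by omega) (by omega)
        have n7 : w3 ≤ m := hmax _ _ (by omega) (by omega) (by omega) (by omega)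
        have n8 : w4 ≤ m := hmax _ _ (by omega) (by omega) (by omega) (by omega)
        have key : ∀ s t : ℝ, a1 ≤ s → a2 ≤ t →
            s / 2 * ((v1 - 2 * m + v2) / h ^ 2) + t / 2 * ((v3 - 2 * m + v4) / h ^ 2)
              + max (bu * ((w1 + 2 * m + w2 - v1 - v2 - v3 - v4) / (2 * h ^ 2)))
                  (bl * ((v1 + v2 + v3 + v4 - w3 - 2 * m - w4) / (2 * h ^ 2))) ≤ 0 := by
          intro s t hs ht
          have hp := combo_plus_le h s t bu m v1 v2 v3 v4 w1 w2 hh hbu.le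
            (hbu1.trans hs) (hbu2.trans ht) n1 n2 n3 n4 n5 n6
          have hq := combo_minus_le h s t bl m v1 v2 v3 v4 w3 w4 hh hbl.le
            (hbl1.trans hs) (hbl2.trans ht) n1 n2 n3 n4 n7 n8
          rcases max_cases (bu * ((w1 + 2 * m + w2 - v1 - v2 - v3 - v4) / (2 * h ^ 2)))
            (bl * ((v1 + v2 + v3 + v4 - w3 - 2 * m - w4) / (2 * h ^ 2))) with
            ⟨he, _⟩ | ⟨he, _⟩ <;> rw [he] <;> linarith
        have hsum : max (a1 / 2 * ((v1 - 2 * m + v2) / h ^ 2))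
              (b1 / 2 * ((v1 - 2 * m + v2) / h ^ 2))
            + max (a2 / 2 * ((v3 - 2 * m + v4) / h ^ 2))
              (b2 / 2 * ((v3 - 2 * m + v4) / h ^ 2))
            + max (bu * ((w1 + 2 * m + w2 - v1 - v2 - v3 - v4) / (2 * h ^ 2)))
              (bl * ((v1 + v2 + v3 + v4 - w3 - 2 * m - w4) / (2 * h ^ 2))) ≤ 0 := by
          rcases max_cases (a1 / 2 * ((v1 - 2 * m + v2) / h ^ 2))
              (b1 / 2 * ((v1 - 2 * m + v2) / h ^ 2)) with ⟨e1, _⟩ | ⟨e1, _⟩ <;>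
            rcases max_cases (a2 / 2 * ((v3 - 2 * m + v4) / h ^ 2))
              (b2 / 2 * ((v3 - 2 * m + v4) / h ^ 2)) with ⟨e2, _⟩ | ⟨e2, _⟩ <;>
            rw [e1, e2] <;>
            linarith [key a1 a2 le_rfl le_rfl, key a1 b2 le_rfl h2,
              key b1 a2 h1 le_rfl, key b1 b2 h1 h2]
        have hdiff : (m - U n i j) / Δt ≤ 0 := by linarith
        have hle : m - U n i j ≤ 0 := by
          by_contra hc
          push_neg at hc
          exact absurd (div_pos hc hΔt) (by linarith)
        linarith
      · -- minimum point
        intro hmin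
        have n1 : m ≤ v1 := hmin _ _ (by omega) (by omega) (by omega) (by omega)
        have n2 : m ≤ v2 := hmin _ _ (by omega) (by omega) (by omega) (by omega)
        have n3 : m ≤ v3 := hmin _ _ (by omega) (by omega) (by omega) (by omega)
        have n4 : m ≤ v4 := hmin _ _ (by omega) (by omega) (by omega) (by omega)
        have n5 : m ≤ w1 := hmin _ _ (by omega) (by omega) (by omega) (by omega)
        have n6 : m ≤ w2 := hmin _ _ (by omega) (by omega) (by omega) (by omega)
        have hp := combo_plus_ge h a1 a2 bu m v1 v2 v3 v4 w1 w2 hh hbu.le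
          hbu1 hbu2 n1 n2 n3 n4 n5 n6
        have l1 : a1 / 2 * ((v1 - 2 * m + v2) / h ^ 2)
            ≤ max (a1 / 2 * ((v1 - 2 * m + v2) / h ^ 2))
              (b1 / 2 * ((v1 - 2 * m + v2) / h ^ 2)) := le_max_left _ _
        have l2 : a2 / 2 * ((v3 - 2 * m + v4) / h ^ 2)
            ≤ max (a2 / 2 * ((v3 - 2 * m + v4) / h ^ 2))
              (b2 / 2 * ((v3 - 2 * m + v4) / h ^ 2)) := le_max_left _ _
        have l3 : bu * ((w1 + 2 * m + w2 - v1 - v2 - v3 - v4) / (2 * h ^ 2))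
            ≤ max (bu * ((w1 + 2 * m + w2 - v1 - v2 - v3 - v4) / (2 * h ^ 2)))
              (bl * ((v1 + v2 + v3 + v4 - w3 - 2 * m - w4) / (2 * h ^ 2))) :=
          le_max_left _ _
        have hdiff : 0 ≤ (m - U n i j) / Δt := by linarith
        have hle : 0 ≤ m - U n i j := by
          by_contra hc
          push_neg at hc
          exact absurd (div_neg_of_neg_of_pos hc hΔt) (by linarith)
        linarith
    obtain ⟨p, hpS, hpmax⟩ := S.exists_max_image (fun q => U (n + 1) q.1 q.2) hSne
    obtain ⟨q, hqS, hqmin⟩ := S.exists_min_image (fun q => U (n + 1) q.1 q.2) hSne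
    have hpb : 0 ≤ p.1 ∧ p.1 ≤ (M : ℤ) ∧ 0 ≤ p.2 ∧ p.2 ≤ (M : ℤ) := by
      simp only [hS, Finset.mem_product, Finset.mem_Icc] at hpS
      exact ⟨hpS.1.1, hpS.1.2, hpS.2.1, hpS.2.2⟩
    have hqb : 0 ≤ q.1 ∧ q.1 ≤ (M : ℤ) ∧ 0 ≤ q.2 ∧ q.2 ≤ (M : ℤ) := by
      simp only [hS, Finset.mem_product, Finset.mem_Icc] at hqS
      exact ⟨hqS.1.1, hqS.1.2, hqS.2.1, hqS.2.2⟩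
    have hupper : U (n + 1) p.1 p.2 ≤ max C0 Cb := by
      by_cases hbd : p.1 = 0 ∨ p.1 = (M : ℤ) ∨ p.2 = 0 ∨ p.2 = (M : ℤ)
      · exact ((abs_le.mp (hbdry (n + 1) hn p.1 p.2 hpb.1 hpb.2.1 hpb.2.2.1
          hpb.2.2.2 hbd)).2).trans (le_max_right _ _)
      · push_neg at hbd
        have hstep := (hinterior p.1 p.2 (by omega) (by omega) (by omega) (by omega)).1
          (fun a b ha1' ha2' hb1' hb2' => hpmax (a, b) (hmemS a b ha1' ha2' hb1' hb2'))
        exact hstep.trans ((abs_le.mp (IH p.1 p.2 hpb.1 hpb.2.1 hpb.2.2.1 hpb.2.2.2)).2)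
    have hlower : -(max C0 Cb) ≤ U (n + 1) q.1 q.2 := by
      by_cases hbd : q.1 = 0 ∨ q.1 = (M : ℤ) ∨ q.2 = 0 ∨ q.2 = (M : ℤ)
      · have := (abs_le.mp (hbdry (n + 1) hn q.1 q.2 hqb.1 hqb.2.1 hqb.2.2.1
          hqb.2.2.2 hbd)).1
        have : -Cb ≤ U (n + 1) q.1 q.2 := this
        have hCb : Cb ≤ max C0 Cb := le_max_right _ _
        linarith
      · push_neg at hbd
        have hstep := (hinterior q.1 q.2 (by omega) (by omega) (by omega) (by omega)).2
          (fun a b ha1' ha2' hb1' hb2' => hqmin (a, b) (hmemS a b ha1' ha2' hb1' hb2'))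
        have := (abs_le.mp (IH q.1 q.2 hqb.1 hqb.2.1 hqb.2.2.1 hqb.2.2.2)).1
        linarith
    intro i j hi0 hiM hj0 hjM
    refine abs_le.mpr ⟨?_, ?_⟩
    · exact hlower.trans (hqmin (i, j) (hmemS i j hi0 hiM hj0 hjM))
    · exact (hpmax (i, j) (hmemS i j hi0 hiM hj0 hjM)).trans hupper
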